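/- Area evolution under the anisoperimetric ratio gradient flow: let σ be an anisotropy function and let x : ℝ × [0,T) → ℝ² be a smooth family of closed curves evolving by the anisoperimetric ratio gradient flow ∂_t x = (k_σ − L_σ(t)/(2A(t)))·N. Then for all t ∈ [0,T), (d/dt) A(t) = −L(∂W_σ) + L(t)·L_σ(t)/(2A(t)), where L(t) = ∫₀¹ |∂_u x(u,t)| du and L(∂W_σ) = ∫₀^{2π} σ(ν) dν. -/

import Mathlib

open Real MeasureTheory

/-- Anisotropic length `L_σ(t) = ∫₀¹ σ(ν(u,t))|∂_u x(u,t)| du`. -/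
noncomputable def aLenF (σ : ℝ → ℝ) (g νf : ℝ → ℝ → ℝ) (t : ℝ) : ℝ :=
  ∫ u in (0:ℝ)..1, σ (νf u t) * g u t

/-- Enclosed area `A(t) = (1/2)∫₀¹ det(x(u,t), ∂_u x(u,t)) du`, with
`∂_u x = g·(cos νf, sin νf)`. -/
noncomputable def areaF (x : ℝ → ℝ → ℝ × ℝ) (g νf : ℝ → ℝ → ℝ) (t : ℝ) : ℝ :=
  (1 / 2) * ∫ u in (0:ℝ)..1,
    ((x u t).1 * (g u t * Real.sin (νf u t)) - (x u t).2 * (g u t * Real.cos (νf u t)))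

/-- Total length `L(t) = ∫₀¹ |∂_u x(u,t)| du`. -/
noncomputable def lenF (g : ℝ → ℝ → ℝ) (t : ℝ) : ℝ :=
  ∫ u in (0:ℝ)..1, g u t

private lemma contOn_paramInt {T : ℝ} {H : ℝ × ℝ → ℝ}
    (hH : ContinuousOn H ((Set.univ : Set ℝ) ×ˢ Set.Ico (0:ℝ) T)) :
    ContinuousOn (fun r => ∫ u in (0:ℝ)..1, H (u, r)) (Set.Ico (0:ℝ) T) := by
  intro t₀ ht₀
  obtain ⟨ht0, htT⟩ := ht₀
  set b := (t₀ + T) / 2 with hbdef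
  have hb1 : t₀ < b := by simp only [hbdef]; linarith
  have hb2 : b < T := by simp only [hbdef]; linarith
  have hb0 : (0:ℝ) ≤ b := by linarith
  have hKsub : Set.Icc (0:ℝ) 1 ×ˢ Set.Icc (0:ℝ) b ⊆ (Set.univ : Set ℝ) ×ˢ Set.Ico (0:ℝ) T :=
    Set.prod_mono (Set.subset_univ _) (fun r hr => ⟨hr.1, lt_of_le_of_lt hr.2 hb2⟩)
  have hcomp : IsCompact (Set.Icc (0:ℝ) 1 ×ˢ Set.Icc (0:ℝ) b) := isCompact_Icc.prod isCompact_Icc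
  obtain ⟨M, hM⟩ := hcomp.exists_bound_of_continuousOn (hH.mono hKsub)
  have hevS : ∀ᶠ r in nhdsWithin t₀ (Set.Ico (0:ℝ) T), r ∈ Set.Ico (0:ℝ) T :=
    eventually_mem_nhdsWithin
  have hevb : ∀ᶠ r in nhdsWithin t₀ (Set.Ico (0:ℝ) T), r < b :=
    Filter.eventually_of_mem (nhdsWithin_le_nhds (Iio_mem_nhds hb1)) (fun r hr => hr)
  have hslice : ∀ r ∈ Set.Ico (0:ℝ) T, ContinuousOn (fun u => H (u, r)) (Set.univ : Set ℝ) := by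
    intro r hr
    exact hH.comp ((continuous_id.prodMk continuous_const).continuousOn)
      (fun u _ => ⟨Set.mem_univ _, hr⟩)
  apply intervalIntegral.continuousWithinAt_of_dominated_interval (bound := fun _ => M)
  · exact hevS.mono (fun r hr =>
      (((hslice r hr).mono (Set.subset_univ _)).aestronglyMeasurable measurableSet_uIoc))
  · refine (hevS.and hevb).mono ?_
    rintro r ⟨hr, hrb⟩
    refine MeasureTheory.ae_of_all _ (fun u hu => ?_)
    rw [Set.uIoc_of_le (zero_le_one : (0:ℝ) ≤ 1)] at hu
    exact hM (u, r) ⟨⟨hu.1.le, hu.2⟩, ⟨hr.1, hrb.le⟩⟩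
  · exact intervalIntegrable_const
  · refine MeasureTheory.ae_of_all _ (fun u _ => ?_)
    exact (hH ((u, t₀)) ⟨Set.mem_univ _, ⟨ht0, htT⟩⟩).comp
      ((continuous_const.prodMk continuous_id).continuousWithinAt)
      (fun r hr => ⟨Set.mem_univ _, hr⟩)

/-- Area evolution under the anisoperimetric ratio gradient flow
`∂_t x = (k_σ − L_σ/(2A))·N`:
`(d/dt) A(t) = −L(∂W_σ) + L(t)·L_σ(t)/(2A(t))`, where `L(∂W_σ) = ∫₀^{2π} σ(ν) dν`. -/
theorem area_evolution_anisoperimetric_flow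
    (σ : ℝ → ℝ)
    (hσs : ContDiff ℝ (⊤ : ℕ∞) σ) (hσper : ∀ ν, σ (ν + 2 * π) = σ ν)
    (hσpos : ∀ ν, 0 < σ ν) (hσconv : ∀ ν, 0 < σ ν + deriv (deriv σ) ν)
    (T : ℝ) (x : ℝ → ℝ → ℝ × ℝ) (g νf νu : ℝ → ℝ → ℝ)
    (hxs : ContDiffOn ℝ (⊤ : ℕ∞) (fun p : ℝ × ℝ => x p.1 p.2)
      ((Set.univ : Set ℝ) ×ˢ Set.Ico (0:ℝ) T))
    (hνs : ContDiffOn ℝ (⊤ : ℕ∞) (fun p : ℝ × ℝ => νf p.1 p.2)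
      ((Set.univ : Set ℝ) ×ˢ Set.Ico (0:ℝ) T))
    (hper : ∀ u, ∀ t ∈ Set.Ico (0:ℝ) T, x (u + 1) t = x u t)
    (hνper : ∀ u, ∀ t ∈ Set.Ico (0:ℝ) T, νf (u + 1) t = νf u t + 2 * π)
    (hg : ∀ u, ∀ t ∈ Set.Ico (0:ℝ) T, 0 < g u t)
    (htang : ∀ u, ∀ t ∈ Set.Ico (0:ℝ) T,
      HasDerivAt (fun u' => x u' t)
        (g u t • ((Real.cos (νf u t), Real.sin (νf u t)) : ℝ × ℝ)) u)
    (hνu : ∀ u, ∀ t ∈ Set.Ico (0:ℝ) T, HasDerivAt (fun u' => νf u' t) (νu u t) u)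
    (hinj : ∀ t ∈ Set.Ico (0:ℝ) T, Set.InjOn (fun u => x u t) (Set.Ico 0 1))
    (hA : ∀ t ∈ Set.Ico (0:ℝ) T, 0 < areaF x g νf t)
    -- the anisoperimetric ratio gradient flow equation `∂_t x = (k_σ − L_σ/(2A))·N`
    (hflow : ∀ u, ∀ t ∈ Set.Ico (0:ℝ) T,
      HasDerivWithinAt (fun t' => x u t')
        ((((σ (νf u t) + deriv (deriv σ) (νf u t)) * (νu u t / g u t) -
            aLenF σ g νf t / (2 * areaF x g νf t)) •
          ((-Real.sin (νf u t), Real.cos (νf u t)) : ℝ × ℝ)))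
        (Set.Ico 0 T) t) :
    ∀ t ∈ Set.Ico (0:ℝ) T,
      HasDerivWithinAt (areaF x g νf)
        (-(∫ s in (0:ℝ)..(2 * π), σ s) +
          lenF g t * aLenF σ g νf t / (2 * areaF x g νf t))
        (Set.Ico 0 T) t := by
  intro t ht
  obtain ⟨ht0, htT⟩ := ht
  have htS : t ∈ Set.Ico (0:ℝ) T := ⟨ht0, htT⟩
  have hT : 0 < T := lt_of_le_of_lt ht0 htT
  -- notation
  set S : Set ℝ := Set.Ico (0:ℝ) T with hSdef
  set Ω : Set (ℝ × ℝ) := (Set.univ : Set ℝ) ×ˢ S with hΩdef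
  set f : ℝ × ℝ → ℝ × ℝ := fun p => x p.1 p.2 with hfdef
  set nf : ℝ × ℝ → ℝ := fun p => νf p.1 p.2 with hnfdef
  set F' := fderivWithin ℝ f Ω with hF'def
  set F'' := fderivWithin ℝ F' Ω with hF''def
  set nf' := fderivWithin ℝ nf Ω with hnf'def
  set U : ℝ × ℝ → ℝ × ℝ := fun p => F' p (1, 0) with hUdef
  set V : ℝ × ℝ → ℝ × ℝ := fun p => F' p (0, 1) with hVdef
  set Wf : ℝ × ℝ → ℝ × ℝ := fun p => F'' p (0, 1) (1, 0) with hWdef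
  set ψ : ℝ → ℝ := fun r => -(∫ s in (0:ℝ)..(2 * π), σ s) +
      lenF g r * aLenF σ g νf r / (2 * areaF x g νf r) with hψdef
  have hmemΩ : ∀ (u : ℝ) {s : ℝ}, s ∈ S → ((u, s) : ℝ × ℝ) ∈ Ω :=
    fun u _ hs => ⟨Set.mem_univ _, hs⟩
  have hΩu : UniqueDiffOn ℝ Ω := uniqueDiffOn_univ.prod (uniqueDiffOn_Ico 0 T)
  -- basic derivative facts
  have hdiff : ∀ p ∈ Ω, HasFDerivWithinAt f (F' p) Ω p := fun p hp =>
    ((hxs.differentiableOn (by simp)) p hp).hasFDerivWithinAt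
  have hndiff : ∀ p ∈ Ω, HasFDerivWithinAt nf (nf' p) Ω p := fun p hp =>
    ((hνs.differentiableOn (by simp)) p hp).hasFDerivWithinAt
  have hlineu : ∀ (u s : ℝ), HasDerivAt (fun u' : ℝ => ((u', s) : ℝ × ℝ)) (1, 0) u :=
    fun u s => (hasDerivAt_id u).prodMk (hasDerivAt_const u s)
  have hlinet : ∀ (u s : ℝ), HasDerivAt (fun s' : ℝ => ((u, s') : ℝ × ℝ)) (0, 1) s :=
    fun u s => (hasDerivAt_const s u).prodMk (hasDerivAt_id s)
  -- identification of U with the tangent data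
  have hUd : ∀ (u s : ℝ), s ∈ S → HasDerivAt (fun u' => x u' s) (U (u, s)) u := by
    intro u s hs
    have h := (hdiff (u, s) (hmemΩ u hs)).comp_hasDerivWithinAt u
      ((hlineu u s).hasDerivWithinAt (s := Set.univ)) (fun u' _ => hmemΩ u' hs)
    rw [hasDerivWithinAt_univ] at h
    exact h
  have hUeq : ∀ (u s : ℝ), s ∈ S →
      U (u, s) = g u s • ((Real.cos (νf u s), Real.sin (νf u s)) : ℝ × ℝ) :=
    fun u s hs => (hUd u s hs).unique (htang u s hs)
  -- identification of nf' with νu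
  have hnud : ∀ (u s : ℝ), s ∈ S → HasDerivAt (fun u' => νf u' s) (nf' (u, s) (1, 0)) u := by
    intro u s hs
    have h := (hndiff (u, s) (hmemΩ u hs)).comp_hasDerivWithinAt u
      ((hlineu u s).hasDerivWithinAt (s := Set.univ)) (fun u' _ => hmemΩ u' hs)
    rw [hasDerivWithinAt_univ] at h
    exact h
  have hnueq : ∀ (u s : ℝ), s ∈ S → nf' (u, s) (1, 0) = νu u s :=
    fun u s hs => (hnud u s hs).unique (hνu u s hs)
  -- identification of V with the flow data
  have hVd : ∀ (u s : ℝ), s ∈ S → HasDerivWithinAt (fun s' => x u s') (V (u, s)) S s := by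
    intro u s hs
    exact (hdiff (u, s) (hmemΩ u hs)).comp_hasDerivWithinAt s
      ((hlinet u s).hasDerivWithinAt (s := S)) (fun s' hs' => hmemΩ u hs')
  have hVeq : ∀ (u s : ℝ), s ∈ S →
      V (u, s) = ((σ (νf u s) + deriv (deriv σ) (νf u s)) * (νu u s / g u s) -
          aLenF σ g νf s / (2 * areaF x g νf s)) •
        ((-Real.sin (νf u s), Real.cos (νf u s)) : ℝ × ℝ) := by
    intro u s hs
    have hud : UniqueDiffWithinAt ℝ S s := (uniqueDiffOn_Ico 0 T) s hs
    exact ((hVd u s hs).derivWithin hud).symm.trans ((hflow u s hs).derivWithin hud)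

  -- continuity of all derived objects on the strip
  have hfC : ContinuousOn f Ω := hxs.continuousOn
  have hnfC : ContinuousOn nf Ω := hνs.continuousOn
  have hF's : ContDiffOn ℝ (⊤ : ℕ∞) F' Ω := hxs.fderivWithin hΩu (by simp)
  have hF'C : ContinuousOn F' Ω := hF's.continuousOn
  have hF''C : ContinuousOn F'' Ω := hF's.continuousOn_fderivWithin hΩu (by simp)
  have hnf'C : ContinuousOn nf' Ω := hνs.continuousOn_fderivWithin hΩu (by simp)
  have hUC : ContinuousOn U Ω := hF'C.clm_apply continuousOn_const
  have hVC : ContinuousOn V Ω := hF'C.clm_apply continuousOn_const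
  have hWC : ContinuousOn Wf Ω := (hF''C.clm_apply continuousOn_const).clm_apply continuousOn_const
  set gc : ℝ × ℝ → ℝ := fun p => (U p).1 * Real.cos (nf p) + (U p).2 * Real.sin (nf p)
    with hgcdef
  have hgcC : ContinuousOn gc Ω :=
    ((continuous_fst.comp_continuousOn hUC).mul
      (Real.continuous_cos.comp_continuousOn hnfC)).add
    ((continuous_snd.comp_continuousOn hUC).mul
      (Real.continuous_sin.comp_continuousOn hnfC))
  have hgceq : ∀ (u s : ℝ), s ∈ S → gc (u, s) = g u s := by
    intro u s hs
    simp only [hgcdef]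
    rw [hUeq u s hs]
    have hpy := Real.sin_sq_add_cos_sq (νf u s)
    simp only [Prod.smul_mk, smul_eq_mul]
    show g u s * Real.cos (νf u s) * Real.cos (νf u s)
        + g u s * Real.sin (νf u s) * Real.sin (νf u s) = g u s
    linear_combination (g u s) * hpy
  -- interior facts
  have hO : IsOpen ((Set.univ : Set ℝ) ×ˢ Set.Ioo (0:ℝ) T) := isOpen_univ.prod isOpen_Ioo
  have hOsub : (Set.univ : Set ℝ) ×ˢ Set.Ioo (0:ℝ) T ⊆ Ω :=
    Set.prod_mono subset_rfl Set.Ioo_subset_Ico_self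
  have hΩnhds : ∀ p : ℝ × ℝ, p ∈ (Set.univ : Set ℝ) ×ˢ Set.Ioo (0:ℝ) T → Ω ∈ nhds p :=
    fun p hp => Filter.mem_of_superset (hO.mem_nhds hp) hOsub
  have hfa : ∀ p : ℝ × ℝ, p ∈ (Set.univ : Set ℝ) ×ˢ Set.Ioo (0:ℝ) T →
      HasFDerivAt f (F' p) p :=
    fun p hp => (hdiff p (hOsub hp)).hasFDerivAt (hΩnhds p hp)
  have hF'a : ∀ p : ℝ × ℝ, p ∈ (Set.univ : Set ℝ) ×ˢ Set.Ioo (0:ℝ) T →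
      HasFDerivAt F' (F'' p) p :=
    fun p hp => (((hF's.differentiableOn (by simp)) p (hOsub hp)).hasFDerivWithinAt).hasFDerivAt
      (hΩnhds p hp)
  have hsymm : ∀ p : ℝ × ℝ, p ∈ (Set.univ : Set ℝ) ×ˢ Set.Ioo (0:ℝ) T →
      F'' p (0, 1) (1, 0) = F'' p (1, 0) (0, 1) := by
    intro p hp
    have hev : ∀ᶠ y in nhds p, HasFDerivAt f (F' y) y :=
      Filter.eventually_of_mem (hO.mem_nhds hp) (fun y hy => hfa y hy)
    exact second_derivative_symmetric_of_eventually hev (hF'a p hp) (0, 1) (1, 0)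
  -- interior partial derivatives
  have hxdt : ∀ (u s : ℝ), s ∈ Set.Ioo (0:ℝ) T →
      HasDerivAt (fun s' => x u s') (V (u, s)) s := by
    intro u s hs
    exact (hfa (u, s) ⟨Set.mem_univ _, hs⟩).comp_hasDerivAt s (hlinet u s)
  have hUdt : ∀ (u s : ℝ), s ∈ Set.Ioo (0:ℝ) T →
      HasDerivAt (fun s' => U (u, s')) (Wf (u, s)) s := by
    intro u s hs
    have h1 : HasDerivAt (fun s' => F' (u, s')) (F'' (u, s) (0, 1)) s :=
      (hF'a (u, s) ⟨Set.mem_univ _, hs⟩).comp_hasDerivAt s (hlinet u s)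
    have h2 := h1.clm_apply (hasDerivAt_const s ((1:ℝ), (0:ℝ)))
    simpa using h2
  have hVdu : ∀ (u s : ℝ), s ∈ Set.Ioo (0:ℝ) T →
      HasDerivAt (fun u' => V (u', s)) (Wf (u, s)) u := by
    intro u s hs
    have h1 : HasDerivAt (fun u' => F' (u', s)) (F'' (u, s) (1, 0)) u :=
      (hF'a (u, s) ⟨Set.mem_univ _, hs⟩).comp_hasDerivAt u (hlineu u s)
    have h2 := h1.clm_apply (hasDerivAt_const u ((0:ℝ), (1:ℝ)))
    show HasDerivAt (fun u' => (F' (u', s)) (0, 1)) (((F'' (u, s)) (0, 1)) (1, 0)) u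
    rw [hsymm (u, s) ⟨Set.mem_univ _, hs⟩]
    simpa using h2

  -- the area integrand and its time derivative
  set Ft : ℝ × ℝ → ℝ := fun p => (1/2) * ((f p).1 * (U p).2 - (f p).2 * (U p).1) with hFtdef
  set G : ℝ × ℝ → ℝ := fun p => (1/2) * (((V p).1 * (U p).2 - (V p).2 * (U p).1) +
      ((f p).1 * (Wf p).2 - (f p).2 * (Wf p).1)) with hGdef
  have hFtC : ContinuousOn Ft Ω := continuousOn_const.mul
    (((continuous_fst.comp_continuousOn hfC).mul (continuous_snd.comp_continuousOn hUC)).sub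
     ((continuous_snd.comp_continuousOn hfC).mul (continuous_fst.comp_continuousOn hUC)))
  have hGC : ContinuousOn G Ω := continuousOn_const.mul
    ((((continuous_fst.comp_continuousOn hVC).mul (continuous_snd.comp_continuousOn hUC)).sub
      ((continuous_snd.comp_continuousOn hVC).mul (continuous_fst.comp_continuousOn hUC))).add
     (((continuous_fst.comp_continuousOn hfC).mul (continuous_snd.comp_continuousOn hWC)).sub
      ((continuous_snd.comp_continuousOn hfC).mul (continuous_fst.comp_continuousOn hWC))))
  have hfst : ∀ {φ : ℝ → ℝ × ℝ} {v : ℝ × ℝ} {r : ℝ}, HasDerivAt φ v r →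
      HasDerivAt (fun y => (φ y).1) v.1 r := fun h =>
    ((ContinuousLinearMap.fst ℝ ℝ ℝ).hasFDerivAt).comp_hasDerivAt _ h
  have hsnd : ∀ {φ : ℝ → ℝ × ℝ} {v : ℝ × ℝ} {r : ℝ}, HasDerivAt φ v r →
      HasDerivAt (fun y => (φ y).2) v.2 r := fun h =>
    ((ContinuousLinearMap.snd ℝ ℝ ℝ).hasFDerivAt).comp_hasDerivAt _ h
  have hFt_deriv : ∀ (u s : ℝ), s ∈ Set.Ioo (0:ℝ) T →
      HasDerivAt (fun s' => Ft (u, s')) (G (u, s)) s := by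
    intro u s hs
    have h1 := hxdt u s hs
    have h2 := hUdt u s hs
    have h := ((((hfst h1).mul (hsnd h2)).sub ((hsnd h1).mul (hfst h2))).const_mul (1/2 : ℝ))
    refine h.congr_deriv ?_
    simp only [hGdef]
    ring

  have htline : ∀ (u : ℝ), Continuous (fun s' : ℝ => ((u, s') : ℝ × ℝ)) :=
    fun u => continuous_const.prodMk continuous_id
  have huline : ∀ (s : ℝ), Continuous (fun u' : ℝ => ((u', s) : ℝ × ℝ)) :=
    fun s => continuous_id.prodMk continuous_const
  have hFTCt : ∀ r ∈ S, ∀ u : ℝ, (∫ s' in (0:ℝ)..r, G (u, s')) = Ft (u, r) - Ft (u, 0) := by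
    intro r hr u
    have h0r : (0:ℝ) ≤ r := hr.1
    have hmap : ∀ s' ∈ Set.Icc (0:ℝ) r, ((u, s') : ℝ × ℝ) ∈ Ω :=
      fun s' hs' => hmemΩ u ⟨hs'.1, lt_of_le_of_lt hs'.2 hr.2⟩
    apply intervalIntegral.integral_eq_sub_of_hasDeriv_right_of_le h0r
    · exact hFtC.comp (htline u).continuousOn hmap
    · intro s hs
      exact (hFt_deriv u s ⟨hs.1, lt_trans hs.2 hr.2⟩).hasDerivWithinAt
    · apply ContinuousOn.intervalIntegrable
      rw [Set.uIcc_of_le h0r]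
      exact hGC.comp (htline u).continuousOn hmap
  have hArea : ∀ r ∈ S, areaF x g νf r = ∫ u in (0:ℝ)..1, Ft (u, r) := by
    intro r hr
    rw [areaF, ← intervalIntegral.integral_const_mul]
    refine intervalIntegral.integral_congr (fun u _ => ?_)
    simp only [hFtdef]
    rw [hUeq u r hr]
    simp only [Prod.smul_mk, smul_eq_mul]
    rfl
  have hswap : ∀ r ∈ S, (∫ u in (0:ℝ)..1, ∫ s' in (0:ℝ)..r, G (u, s'))
      = ∫ s' in (0:ℝ)..r, ∫ u in (0:ℝ)..1, G (u, s') := by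
    intro r hr
    have h0r : (0:ℝ) ≤ r := hr.1
    have hKsub : Set.Icc (0:ℝ) 1 ×ˢ Set.Icc (0:ℝ) r ⊆ Ω :=
      Set.prod_mono (Set.subset_univ _) (fun s' hs' => ⟨hs'.1, lt_of_le_of_lt hs'.2 hr.2⟩)
    have hint : MeasureTheory.IntegrableOn G (Set.Ioc (0:ℝ) 1 ×ˢ Set.Ioc (0:ℝ) r) :=
      (ContinuousOn.integrableOn_compact (isCompact_Icc.prod isCompact_Icc)
        (hGC.mono hKsub)).mono_set
        (Set.prod_mono Set.Ioc_subset_Icc_self Set.Ioc_subset_Icc_self)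
    simp only [intervalIntegral.integral_of_le h0r,
      intervalIntegral.integral_of_le (zero_le_one : (0:ℝ) ≤ 1)]
    apply MeasureTheory.integral_integral_swap (f := fun u s' => G (u, s'))
    rw [MeasureTheory.Measure.prod_restrict, ← MeasureTheory.Measure.volume_eq_prod]
    exact hint

  -- smoothness facts for σ
  have hσC : Continuous σ := hσs.continuous
  have hσtop : ContDiff ℝ ((⊤:ℕ∞) : WithTop ℕ∞) σ := hσs.of_le (by simp)
  have hσi := (contDiff_infty_iff_deriv.mp hσtop).2
  have hσd1 : Differentiable ℝ (deriv σ) := (contDiff_infty_iff_deriv.mp hσi).1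
  have hσC1 : Continuous (deriv σ) := hσi.continuous
  have hσC2 : Continuous (deriv (deriv σ)) := hσi.continuous_deriv (by exact_mod_cast le_top)
  have hσper1 : ∀ a, deriv σ (a + 2*π) = deriv σ a := by
    intro a
    rw [← deriv_comp_add_const σ (2*π) a]
    congr 1; funext y; exact hσper y
  have hσper2 : ∀ a, deriv (deriv σ) (a + 2*π) = deriv (deriv σ) a := by
    intro a
    rw [← deriv_comp_add_const (deriv σ) (2*π) a]
    congr 1; funext y; exact hσper1 y
  -- an antiderivative of σ + σ''
  set Φ : ℝ → ℝ := fun r => (∫ y in (0:ℝ)..r, σ y) + deriv σ r with hΦdef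
  have hΦd : ∀ r, HasDerivAt Φ (σ r + deriv (deriv σ) r) r := by
    intro r
    have h1 : HasDerivAt (fun r' => ∫ y in (0:ℝ)..r', σ y) (σ r) r := by
      apply intervalIntegral.integral_hasDerivAt_right (hσC.intervalIntegrable 0 r)
      · exact ⟨Set.univ, Filter.univ_mem, hσC.aestronglyMeasurable.restrict⟩
      · exact hσC.continuousAt
    exact h1.add (hσd1 r).hasDerivAt
  -- the core interior computation
  have hcoreG : ∀ s ∈ Set.Ioo (0:ℝ) T, (∫ u in (0:ℝ)..1, G (u, s)) = ψ s := by
    intro s hs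
    have hsS : s ∈ S := Set.Ioo_subset_Ico_self hs
    -- periodicity data
    have hν1 : νf 1 s = νf 0 s + 2*π := by simpa using hνper 0 s hsS
    have hcos1 : Real.cos (νf 1 s) = Real.cos (νf 0 s) := by rw [hν1, Real.cos_add_two_pi]
    have hsin1 : Real.sin (νf 1 s) = Real.sin (νf 0 s) := by rw [hν1, Real.sin_add_two_pi]
    have hx1 : x 1 s = x 0 s := by simpa using hper 0 s hsS
    have hνu1 : νu 1 s = νu 0 s := by
      have h10 : HasDerivAt (fun u' => νf u' s) (νu 1 s) (0 + 1) := by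
        rw [zero_add]; exact hνu 1 s hsS
      have ha : HasDerivAt (fun u' => νf (u' + 1) s) (νu 1 s) 0 := by
        have h := h10.comp 0 ((hasDerivAt_id (0:ℝ)).add_const 1)
        simpa [Function.comp_def] using h
      have hb : HasDerivAt (fun u' => νf (u' + 1) s) (νu 0 s) 0 := by
        have heq : (fun u' => νf (u' + 1) s) = fun u' => νf u' s + 2*π :=
          funext fun u' => hνper u' s hsS
        rw [heq]
        exact (hνu 0 s hsS).add_const _
      exact ha.unique hb
    have hg1 : g 1 s = g 0 s := by
      have h10 : HasDerivAt (fun u' => x u' s)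
          (g 1 s • ((Real.cos (νf 1 s), Real.sin (νf 1 s)) : ℝ × ℝ)) (0 + 1) := by
        rw [zero_add]; exact htang 1 s hsS
      have ha : HasDerivAt (fun u' => x (u' + 1) s)
          (g 1 s • ((Real.cos (νf 1 s), Real.sin (νf 1 s)) : ℝ × ℝ)) 0 := by
        have h := h10.scomp 0 ((hasDerivAt_id (0:ℝ)).add_const 1)
        simpa [Function.comp_def] using h
      have hb : HasDerivAt (fun u' => x (u' + 1) s)
          (g 0 s • ((Real.cos (νf 0 s), Real.sin (νf 0 s)) : ℝ × ℝ)) 0 := by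
        have heq : (fun u' => x (u' + 1) s) = fun u' => x u' s := funext fun u' => hper u' s hsS
        rw [heq]
        exact htang 0 s hsS
      have h := ha.unique hb
      rw [hcos1, hsin1] at h
      have h1 := congrArg Prod.fst h
      have h2 := congrArg Prod.snd h
      simp only [Prod.smul_mk, smul_eq_mul] at h1 h2
      have hpy := Real.sin_sq_add_cos_sq (νf 0 s)
      linear_combination Real.cos (νf 0 s) * h1 + Real.sin (νf 0 s) * h2 - (g 1 s - g 0 s) * hpy
    have hV1 : V (1, s) = V (0, s) := by
      rw [hVeq 1 s hsS, hVeq 0 s hsS, hν1, hσper, hσper2, hνu1, hg1,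
        Real.sin_add_two_pi, Real.cos_add_two_pi]
    -- integration by parts in u
    set D : ℝ → ℝ := fun u => (x u s).1 * (V (u, s)).2 - (x u s).2 * (V (u, s)).1 with hDdef
    have hDd : ∀ u : ℝ, HasDerivAt D
        (((U (u, s)).1 * (V (u, s)).2 - (U (u, s)).2 * (V (u, s)).1) +
         ((x u s).1 * (Wf (u, s)).2 - (x u s).2 * (Wf (u, s)).1)) u := by
      intro u
      have h1 := hUd u s hsS
      have h2 := hVdu u s hs
      have h := (((hfst h1).mul (hsnd h2)).sub ((hsnd h1).mul (hfst h2)))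
      refine h.congr_deriv ?_
      ring
    have hsliceC : ∀ {φ : ℝ × ℝ → ℝ}, ContinuousOn φ Ω →
        ContinuousOn (fun u => φ (u, s)) (Set.uIcc (0:ℝ) 1) := fun hφ =>
      hφ.comp (huline s).continuousOn (fun u _ => hmemΩ u hsS)
    have hintUV : IntervalIntegrable
        (fun u => ((U (u, s)).1 * (V (u, s)).2 - (U (u, s)).2 * (V (u, s)).1)) volume 0 1 :=
      (((hsliceC (continuous_fst.comp_continuousOn hUC)).mul
        (hsliceC (continuous_snd.comp_continuousOn hVC))).sub
       ((hsliceC (continuous_snd.comp_continuousOn hUC)).mul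
        (hsliceC (continuous_fst.comp_continuousOn hVC)))).intervalIntegrable
    have hintfW : IntervalIntegrable
        (fun u => ((x u s).1 * (Wf (u, s)).2 - (x u s).2 * (Wf (u, s)).1)) volume 0 1 :=
      (((hsliceC (continuous_fst.comp_continuousOn hfC)).mul
        (hsliceC (continuous_snd.comp_continuousOn hWC))).sub
       ((hsliceC (continuous_snd.comp_continuousOn hfC)).mul
        (hsliceC (continuous_fst.comp_continuousOn hWC)))).intervalIntegrable
    have hIBP : (∫ u in (0:ℝ)..1,
        (((U (u, s)).1 * (V (u, s)).2 - (U (u, s)).2 * (V (u, s)).1) +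
         ((x u s).1 * (Wf (u, s)).2 - (x u s).2 * (Wf (u, s)).1))) = 0 := by
      rw [intervalIntegral.integral_eq_sub_of_hasDerivAt (fun u _ => hDd u) (hintUV.add hintfW)]
      simp only [hDdef]
      rw [hx1, hV1]
      ring
    -- pointwise value of det(V, U)
    have hdetVU : ∀ u : ℝ, ((V (u, s)).1 * (U (u, s)).2 - (V (u, s)).2 * (U (u, s)).1)
        = -((σ (νf u s) + deriv (deriv σ) (νf u s)) * νu u s) +
          (aLenF σ g νf s / (2 * areaF x g νf s)) * g u s := by
      intro u
      rw [hVeq u s hsS, hUeq u s hsS]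
      simp only [Prod.smul_mk, smul_eq_mul]
      have hgne : g u s ≠ 0 := (hg u s hsS).ne'
      have hpy := Real.sin_sq_add_cos_sq (νf u s)
      have hdiv : νu u s / g u s * g u s = νu u s := div_mul_cancel₀ _ hgne
      linear_combination
        (-((σ (νf u s) + deriv (deriv σ) (νf u s)) * (νu u s / g u s) -
          aLenF σ g νf s / (2 * areaF x g νf s)) * g u s) * hpy -
        (σ (νf u s) + deriv (deriv σ) (νf u s)) * hdiv
    -- split the integrand
    have hGsplit : Set.EqOn (fun u => G (u, s))
        (fun u => (-((σ (νf u s) + deriv (deriv σ) (νf u s)) * νu u s) +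
            (aLenF σ g νf s / (2 * areaF x g νf s)) * g u s) +
          (1/2) * (((U (u, s)).1 * (V (u, s)).2 - (U (u, s)).2 * (V (u, s)).1) +
            ((x u s).1 * (Wf (u, s)).2 - (x u s).2 * (Wf (u, s)).1)))
        (Set.uIcc (0:ℝ) 1) := by
      intro u _
      simp only [hGdef, hfdef]
      rw [← hdetVU u]
      ring
    -- integrability of the main part
    have hνufun : (fun u => νu u s) = fun u => nf' (u, s) (1, 0) :=
      funext fun u => (hnueq u s hsS).symm
    have hgfun : (fun u => g u s) = fun u => gc (u, s) :=
      funext fun u => (hgceq u s hsS).symm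
    have hνuC : ContinuousOn (fun u => νu u s) (Set.uIcc (0:ℝ) 1) := by
      rw [hνufun]; exact hsliceC (hnf'C.clm_apply continuousOn_const)
    have hgC' : ContinuousOn (fun u => g u s) (Set.uIcc (0:ℝ) 1) := by
      rw [hgfun]; exact hsliceC hgcC
    have hνfC : ContinuousOn (fun u => νf u s) (Set.uIcc (0:ℝ) 1) := hsliceC hnfC
    have hintA : IntervalIntegrable
        (fun u => (σ (νf u s) + deriv (deriv σ) (νf u s)) * νu u s) volume 0 1 :=
      (((hσC.comp_continuousOn hνfC).add (hσC2.comp_continuousOn hνfC)).mul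
        hνuC).intervalIntegrable
    have hintg : IntervalIntegrable (fun u => g u s) volume 0 1 := hgC'.intervalIntegrable
    have hintMain : IntervalIntegrable
        (fun u => -((σ (νf u s) + deriv (deriv σ) (νf u s)) * νu u s) +
          (aLenF σ g νf s / (2 * areaF x g νf s)) * g u s) volume 0 1 :=
      hintA.neg.add (hintg.const_mul _)
    have hintAneg : IntervalIntegrable
        (fun u => -((σ (νf u s) + deriv (deriv σ) (νf u s)) * νu u s)) volume 0 1 := hintA.neg
    have hintgc : IntervalIntegrable
        (fun u => (aLenF σ g νf s / (2 * areaF x g νf s)) * g u s) volume 0 1 :=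
      hintg.const_mul _
    have hinthalf : IntervalIntegrable
        (fun u => (1/2 : ℝ) * (((U (u, s)).1 * (V (u, s)).2 - (U (u, s)).2 * (V (u, s)).1) +
            ((x u s).1 * (Wf (u, s)).2 - (x u s).2 * (Wf (u, s)).1))) volume 0 1 :=
      (hintUV.add hintfW).const_mul _
    rw [intervalIntegral.integral_congr hGsplit,
      intervalIntegral.integral_add hintMain hinthalf,
      intervalIntegral.integral_const_mul, hIBP, mul_zero, add_zero,
      intervalIntegral.integral_add hintAneg hintgc,
      intervalIntegral.integral_neg, intervalIntegral.integral_const_mul]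
    -- FTC for the σ-term
    have hFTCΦ : (∫ u in (0:ℝ)..1, (σ (νf u s) + deriv (deriv σ) (νf u s)) * νu u s)
        = Φ (νf 1 s) - Φ (νf 0 s) :=
      intervalIntegral.integral_eq_sub_of_hasDerivAt (f := fun u => Φ (νf u s))
        (fun u _ => by have := (hΦd (νf u s)).comp u (hνu u s hsS); exact this) hintA
    rw [hFTCΦ]
    have hΦval : Φ (νf 1 s) - Φ (νf 0 s) = ∫ y in (0:ℝ)..(2*π), σ y := by
      rw [hν1]
      simp only [hΦdef]
      rw [hσper1 (νf 0 s)]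
      have h1 : (∫ y in (0:ℝ)..(νf 0 s + 2*π), σ y) - (∫ y in (0:ℝ)..(νf 0 s), σ y)
          = ∫ y in (νf 0 s)..(νf 0 s + 2*π), σ y :=
        intervalIntegral.integral_interval_sub_left (hσC.intervalIntegrable _ _)
          (hσC.intervalIntegrable _ _)
      have h2 : (∫ y in (νf 0 s)..(νf 0 s + 2*π), σ y) = ∫ y in (0:ℝ)..((0:ℝ) + 2*π), σ y :=
        Function.Periodic.intervalIntegral_add_eq hσper (νf 0 s) 0
      rw [zero_add] at h2
      linarith [h1, h2]
    rw [hΦval]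
    have hlen : (∫ u in (0:ℝ)..1, g u s) = lenF g s := rfl
    rw [hlen]
    simp only [hψdef]
    ring

  -- representation formula
  have hFtInt : ∀ r ∈ S, IntervalIntegrable (fun u => Ft (u, r)) volume 0 1 := fun r hr =>
    (hFtC.comp (huline r).continuousOn (fun u _ => hmemΩ u hr)).intervalIntegrable
  have h0S : (0:ℝ) ∈ S := ⟨le_refl 0, hT⟩
  have hrep : ∀ r ∈ S, areaF x g νf r = areaF x g νf 0 + ∫ s' in (0:ℝ)..r, ψ s' := by
    intro r hr
    have e1 : areaF x g νf r - areaF x g νf 0 = ∫ u in (0:ℝ)..1, (Ft (u, r) - Ft (u, 0)) := by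
      rw [hArea r hr, hArea 0 h0S, ← intervalIntegral.integral_sub (hFtInt r hr) (hFtInt 0 h0S)]
    have e2 : (∫ u in (0:ℝ)..1, (Ft (u, r) - Ft (u, 0)))
        = ∫ u in (0:ℝ)..1, ∫ s' in (0:ℝ)..r, G (u, s') :=
      intervalIntegral.integral_congr (fun u _ => (hFTCt r hr u).symm)
    have e3 := hswap r hr
    have e4 : (∫ s' in (0:ℝ)..r, ∫ u in (0:ℝ)..1, G (u, s')) = ∫ s' in (0:ℝ)..r, ψ s' := by
      rw [intervalIntegral.integral_of_le hr.1, intervalIntegral.integral_of_le hr.1]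
      refine MeasureTheory.setIntegral_congr_fun measurableSet_Ioc (fun s' hs' => ?_)
      exact hcoreG s' ⟨hs'.1, lt_of_le_of_lt hs'.2 hr.2⟩
    linarith [e1, e2, e3, e4]
  -- continuity of ψ on S
  have hlenC : ContinuousOn (lenF g) S := by
    refine (contOn_paramInt (T := T) (H := gc) hgcC).congr (fun r hr => ?_)
    show lenF g r = ∫ u in (0:ℝ)..1, gc (u, r)
    rw [lenF]
    exact intervalIntegral.integral_congr (fun u _ => (hgceq u r hr).symm)
  have haLenC : ContinuousOn (aLenF σ g νf) S := by
    refine (contOn_paramInt (T := T) (H := fun p => σ (nf p) * gc p)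
      ((hσC.comp_continuousOn hnfC).mul hgcC)).congr (fun r hr => ?_)
    show aLenF σ g νf r = ∫ u in (0:ℝ)..1, σ (νf u r) * gc (u, r)
    rw [aLenF]
    exact intervalIntegral.integral_congr (fun u _ => by rw [hgceq u r hr])
  have hareaC : ContinuousOn (areaF x g νf) S := by
    have hHC : ContinuousOn (fun p : ℝ × ℝ => (f p).1 * (gc p * Real.sin (nf p)) -
        (f p).2 * (gc p * Real.cos (nf p))) Ω :=
      ((continuous_fst.comp_continuousOn hfC).mul
        (hgcC.mul (Real.continuous_sin.comp_continuousOn hnfC))).sub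
      ((continuous_snd.comp_continuousOn hfC).mul
        (hgcC.mul (Real.continuous_cos.comp_continuousOn hnfC)))
    have hc2 : ContinuousOn (fun r => (1/2 : ℝ) * ∫ u in (0:ℝ)..1,
        ((f (u, r)).1 * (gc (u, r) * Real.sin (nf (u, r))) -
         (f (u, r)).2 * (gc (u, r) * Real.cos (nf (u, r))))) S :=
      continuousOn_const.mul (contOn_paramInt (T := T) hHC)
    refine hc2.congr (fun r hr => ?_)
    show areaF x g νf r = (1/2 : ℝ) * ∫ u in (0:ℝ)..1,
      ((x u r).1 * (gc (u, r) * Real.sin (νf u r)) - (x u r).2 * (gc (u, r) * Real.cos (νf u r)))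
    rw [areaF]
    congr 1
    exact intervalIntegral.integral_congr (fun u _ => by rw [hgceq u r hr])
  have hψC : ContinuousOn ψ S :=
    continuousOn_const.add ((hlenC.mul haLenC).div (continuousOn_const.mul hareaC)
      (fun r hr => (mul_pos two_pos (hA r hr)).ne'))
  -- the fundamental theorem of calculus at t
  have hψint : IntervalIntegrable ψ volume 0 t := by
    apply ContinuousOn.intervalIntegrable
    rw [Set.uIcc_of_le ht0]
    exact hψC.mono (fun r hr => ⟨hr.1, lt_of_le_of_lt hr.2 htT⟩)
  have hmain : HasDerivWithinAt (fun r => areaF x g νf 0 + ∫ s' in (0:ℝ)..r, ψ s') (ψ t) S t := by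
    refine HasDerivWithinAt.const_add _ ?_
    rcases eq_or_lt_of_le ht0 with h0 | h0
    · -- t = 0
      subst h0
      have hmeas : StronglyMeasurableAtFilter ψ (nhdsWithin 0 (Set.Ioi (0:ℝ))) volume := by
        refine ⟨Set.Ioo 0 T, ?_, (hψC.mono Set.Ioo_subset_Ico_self).aestronglyMeasurable
          measurableSet_Ioo⟩
        refine mem_nhdsWithin.mpr ⟨Set.Iio T, isOpen_Iio, hT, ?_⟩
        intro y hy
        exact ⟨hy.2, hy.1⟩
      have hcont : ContinuousWithinAt ψ (Set.Ioi (0:ℝ)) 0 := by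
        have hc : ContinuousWithinAt ψ (Set.Ioo (0:ℝ) T) 0 :=
          (hψC 0 h0S).mono Set.Ioo_subset_Ico_self
        have hIio : Set.Iio T ∈ nhdsWithin (0:ℝ) (Set.Ioi 0) :=
          nhdsWithin_le_nhds (Iio_mem_nhds hT)
        have heq : nhdsWithin (0:ℝ) (Set.Iio T ∩ Set.Ioi 0) = nhdsWithin (0:ℝ) (Set.Ioi 0) :=
          nhdsWithin_inter_of_mem hIio
        have hset : Set.Iio T ∩ Set.Ioi (0:ℝ) = Set.Ioo (0:ℝ) T := by
          ext y; exact and_comm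
        rw [hset] at heq
        exact hc.mono_left (le_of_eq heq.symm)
      have hq := intervalIntegral.integral_hasDerivWithinAt_right
        (s := Set.Ici (0:ℝ)) (t := Set.Ioi (0:ℝ)) hψint hmeas hcont
      exact hq.mono (fun r hr => hr.1)
    · -- 0 < t
      have hnhds : S ∈ nhds t :=
        Filter.mem_of_superset (isOpen_Ioo.mem_nhds ⟨h0, htT⟩) Set.Ioo_subset_Ico_self
      have hmeas : StronglyMeasurableAtFilter ψ (nhds t) volume :=
        ⟨Set.Ioo 0 T, isOpen_Ioo.mem_nhds ⟨h0, htT⟩,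
          (hψC.mono Set.Ioo_subset_Ico_self).aestronglyMeasurable measurableSet_Ioo⟩
      have hcont : ContinuousAt ψ t := (hψC t htS).continuousAt hnhds
      exact (intervalIntegral.integral_hasDerivAt_right hψint hmeas hcont).hasDerivWithinAt
  exact hmain.congr (fun r hr => hrep r hr) (hrep t htS)
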